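/- arXiv:1307.0200 — 4 statements merged into one kernel-verified Lean document; each statement's English description precedes it below -/
import Mathlib

section
/- Let M be a module over a commutative ring and p₁, p₂ : M → M idempotent endomorphisms such that p₁ - p₂ is nilpotent. Then the kernel of p₂ intersected with the image of p₁ is the zero submodule. -/
/-- For idempotent endomorphisms `p₁ p₂` of a module with `p₁ - p₂` nilpotent,
`ker p₂ ∩ im p₁ = 0`. -/
theorem stmt2 {R M : Type*} [CommRing R] [AddCommGroup M] [Module R M]
    (p₁ p₂ : Module.End R M) (h₁ : IsIdempotentElem p₁) (h₂ : IsIdempotentElem p₂)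
    (hn : IsNilpotent (p₁ - p₂)) :
    LinearMap.ker p₂ ⊓ LinearMap.range p₁ = ⊥ := by
  obtain ⟨n, hnz⟩ := hn
  rw [eq_bot_iff]
  rintro x ⟨hk, y, rfl⟩
  simp only [Submodule.mem_bot]
  have hfix : (p₁ - p₂) (p₁ y) = p₁ y := by
    have h2 : p₂ (p₁ y) = 0 := hk
    have h1 : p₁ (p₁ y) = p₁ y := by
      have := congrArg (· y) h₁
      simpa [Module.End.mul_apply] using this
    simp [LinearMap.sub_apply, h1, h2]
  have hpow : ∀ k, ((p₁ - p₂) ^ k) (p₁ y) = p₁ y := by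
    intro k
    induction k with
    | zero => simp
    | succ k ih => rw [pow_succ', Module.End.mul_apply, ih, hfix]
  have := hpow n
  rw [hnz] at this
  simpa using this.symm
end

section
/- Let M be a module over a commutative ring and p₁, p₂ : M → M idempotent endomorphisms with p₁ - p₂ nilpotent. Then the submodules im(p₁) and im(p₂) of M are isomorphic as modules. -/
/-- Idempotent endomorphisms of a module differing by a nilpotent have isomorphic images. -/
theorem stmt4 {R M : Type*} [CommRing R] [AddCommGroup M] [Module R M]
    (p₁ p₂ : Module.End R M) (h₁ : IsIdempotentElem p₁) (h₂ : IsIdempotentElem p₂)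
    (hn : IsNilpotent (p₁ - p₂)) :
    Nonempty ((LinearMap.range p₁) ≃ₗ[R] (LinearMap.range p₂)) := by
  set u : Module.End R M := p₂ * p₁ + (1 - p₂) * (1 - p₁) with hu_def
  set v : Module.End R M := p₁ * p₂ + (1 - p₁) * (1 - p₂) with hv_def
  set n : Module.End R M := (p₁ - p₂) ^ 2 with hn_def
  have hnnil : IsNilpotent n := by
    obtain ⟨k, hk⟩ := hn
    exact ⟨k, by rw [hn_def, ← pow_mul, mul_comm, pow_mul, hk, sq, mul_zero]⟩
  have key : ∀ a b : Module.End R M, IsIdempotentElem a → IsIdempotentElem b →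
      (b * a + (1 - b) * (1 - a)) * (a * b + (1 - a) * (1 - b)) = 1 - (a - b) ^ 2 := by
    intro a b ha hb
    have haa : ∀ x : Module.End R M, a * (a * x) = a * x := fun x => by
      rw [← mul_assoc, ha.eq]
    have hbb : ∀ x : Module.End R M, b * (b * x) = b * x := fun x => by
      rw [← mul_assoc, hb.eq]
    simp only [pow_two, mul_sub, sub_mul, mul_one, one_mul, mul_add, add_mul, mul_assoc,
      haa, hbb, ha.eq, hb.eq]
    abel
  have huv : u * v = 1 - n := key p₁ p₂ h₁ h₂
  have hvu : v * u = 1 - n := by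
    have h := key p₂ p₁ h₂ h₁
    rw [hu_def, hv_def, hn_def, h]
    congr 1
    noncomm_ring
  have hone : IsUnit (1 - n) := hnnil.isUnit_one_sub
  obtain ⟨w, hw⟩ := hone.exists_right_inv
  obtain ⟨w', hw'⟩ := hone.exists_left_inv
  have hww' : w' = w := by rw [← mul_one w', ← hw, ← mul_assoc, hw', one_mul]
  have hcomm : (1 - n) * v = v * (1 - n) := by
    calc (1 - n) * v = (v * u) * v := by rw [hvu]
      _ = v * (u * v) := by rw [mul_assoc]
      _ = v * (1 - n) := by rw [huv]
  have hvw : v * w = w * v := by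
    calc v * w = 1 * (v * w) := (one_mul _).symm
      _ = w' * (1 - n) * (v * w) := by rw [hw']
      _ = w' * ((1 - n) * v * w) := by simp only [mul_assoc]
      _ = w' * (v * (1 - n) * w) := by rw [hcomm]
      _ = (w' * v) * ((1 - n) * w) := by simp only [mul_assoc]
      _ = w' * v := by rw [hw, mul_one]
      _ = w * v := by rw [hww']
  have hright : u * (v * w) = 1 := by rw [← mul_assoc, huv, hw]
  have hleft : (v * w) * u = 1 := by
    rw [hvw, mul_assoc, hvu, ← hww']; exact hw'
  have huunit : IsUnit u := ⟨⟨u, v * w, hright, hleft⟩, rfl⟩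
  have hbij : Function.Bijective u := (Module.End.isUnit_iff u).mp huunit
  have hup : u * p₁ = p₂ * u := by
    rw [hu_def]
    have e1 : (1 - p₁) * p₁ = 0 := by
      rw [sub_mul, one_mul, h₁.eq, sub_self]
    have e2 : p₂ * (1 - p₂) = 0 := by
      rw [mul_sub, mul_one, h₂.eq, sub_self]
    calc (p₂ * p₁ + (1 - p₂) * (1 - p₁)) * p₁
        = p₂ * (p₁ * p₁) + (1 - p₂) * ((1 - p₁) * p₁) := by noncomm_ring
      _ = p₂ * p₁ := by rw [h₁.eq, e1, mul_zero, add_zero]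
      _ = p₂ * (p₂ * p₁) + p₂ * ((1 - p₂) * (1 - p₁)) := by
          rw [← mul_assoc, h₂.eq, ← mul_assoc, e2, zero_mul, add_zero]
      _ = p₂ * (p₂ * p₁ + (1 - p₂) * (1 - p₁)) := by rw [mul_add]
  let e : M ≃ₗ[R] M := LinearEquiv.ofBijective u hbij
  have hmap : Submodule.map (e : M →ₗ[R] M) (LinearMap.range p₁) = LinearMap.range p₂ := by
    have hcoe : (e : M →ₗ[R] M) = u := rfl
    rw [hcoe, ← LinearMap.range_comp]
    have h : u ∘ₗ p₁ = p₂ ∘ₗ u := hup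
    rw [h, LinearMap.range_comp, LinearMap.range_eq_top.mpr hbij.surjective,
      Submodule.map_top]
  exact ⟨(e.submoduleMap (LinearMap.range p₁)).trans (LinearEquiv.ofEq _ _ hmap)⟩
end

section
/- Let Λ = ⊕_{i ≤ 0} Λⁱ be a commutative ring graded in nonpositive degrees, and let A = ⊕_i Aⁱ be a graded Λ-algebra which is free as a Λ-module with a finite homogeneous basis (τ_i), with τ_i of degree α_i ≥ 0. Define the filtration A^{(l)} = ⊕_{α_i ≥ l} Λ·τ_i. Then A^{(l₁)} · A^{(l₂)} ⊆ A^{(l₁+l₂)}. -/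
/-- Let `Λ` be a commutative ring graded in nonpositive degrees, and `A` a graded `Λ`-algebra,
free as a `Λ`-module with a finite homogeneous basis `b j` of degrees `α j ≥ 0` (the grading
`𝒜` of `A` being the one induced by the grading of `Λ` and the degrees of the basis).  Then
the filtration `F l = span_Λ {b j | α j ≥ l}` satisfies `F l₁ * F l₂ ⊆ F (l₁ + l₂)`. -/
theorem stmt14 {Λ A : Type*} [CommRing Λ] [CommRing A] [Algebra Λ A]
    (ℬ : ℤ → AddSubgroup Λ) [GradedRing ℬ] (hneg : ∀ i : ℤ, 0 < i → ℬ i = ⊥)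
    (𝒜 : ℤ → AddSubgroup A)
    (hAmul : ∀ i j : ℤ, ∀ x ∈ 𝒜 i, ∀ y ∈ 𝒜 j, x * y ∈ 𝒜 (i + j))
    (r : ℕ) (b : Module.Basis (Fin r) Λ A) (α : Fin r → ℕ)
    (hgr : ∀ n : ℤ, (𝒜 n : Set A) =
      {x | ∃ c : Fin r → Λ, (∀ j, c j ∈ ℬ (n - α j)) ∧ x = ∑ j, c j • b j})
    (F : ℕ → Submodule Λ A)
    (hFdef : ∀ l, F l = Submodule.span Λ (⇑b '' {j | l ≤ α j})) :
    ∀ l₁ l₂ : ℕ, ∀ x ∈ F l₁, ∀ y ∈ F l₂, x * y ∈ F (l₁ + l₂) := by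
  intro l₁ l₂ x hx y hy
  have hb : ∀ i : Fin r, b i ∈ 𝒜 (α i) := by
    intro i
    rw [← SetLike.mem_coe, hgr]
    refine ⟨fun k => if k = i then 1 else 0, fun k => ?_, ?_⟩
    · by_cases h : k = i
      · subst h; simpa using SetLike.one_mem_graded ℬ
      · simpa [h] using zero_mem _
    · simp [ite_smul]
  have key : ∀ i j : Fin r, l₁ ≤ α i → l₂ ≤ α j → b i * b j ∈ F (l₁ + l₂) := by
    intro i j hi hj
    have hmem := hAmul _ _ _ (hb i) _ (hb j)
    rw [← SetLike.mem_coe, hgr] at hmem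
    obtain ⟨c, hc, heq⟩ := hmem
    rw [heq, hFdef]
    refine Submodule.sum_mem _ fun k _ => ?_
    by_cases h : l₁ + l₂ ≤ α k
    · exact Submodule.smul_mem _ _ (Submodule.subset_span ⟨k, h, rfl⟩)
    · have h0 : c k = 0 := by
        have hk := hc k
        rw [hneg _ (by omega)] at hk
        simpa using hk
      simp [h0]
  rw [hFdef l₁] at hx
  rw [hFdef l₂] at hy
  induction hx using Submodule.span_induction with
  | mem x hxs =>
    obtain ⟨i, hi, rfl⟩ := hxs
    induction hy using Submodule.span_induction with
    | mem y hys => obtain ⟨j, hj, rfl⟩ := hys; exact key i j hi hj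
    | zero => simp
    | add y z _ _ h1 h2 => rw [mul_add]; exact Submodule.add_mem _ h1 h2
    | smul a y _ h1 => rw [mul_smul_comm]; exact Submodule.smul_mem _ _ h1
  | zero => simp
  | add x z _ _ h1 h2 => rw [add_mul]; exact Submodule.add_mem _ h1 h2
  | smul a x _ h1 => rw [smul_mul_assoc]; exact Submodule.smul_mem _ _ h1
end

section
/- In a (possibly noncommutative) ring R, for elements f, g with (1 - g f)^{n+1} = 0, the element f₁ := Σ_{m=0}^{n} Σ_{i=0}^{m} (-1)^i C(m,i) (f g)^i f satisfies g·f₁ = 1 and, if additionally (1 - f g)^{n+1} = 0, also f₁·g = 1. -/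
lemma stmt18_expand {R : Type*} [Ring R] (x : R) (m : ℕ) :
    ∑ i ∈ Finset.range (m+1), (-1:R)^i * (m.choose i) * x^i = (1 - x)^m := by
  have := (Commute.one_right (-x)).add_pow m
  simp only [one_pow, mul_one] at this
  rw [show (1:R) - x = -x + 1 from sub_eq_neg_add 1 x, this]
  apply Finset.sum_congr rfl; intro i _
  rw [neg_pow x i, mul_assoc, (Nat.cast_commute (m.choose i) (x ^ i)).eq, ← mul_assoc]

lemma stmt18_conj {R : Type*} [Ring R] (a b : R) (n : ℕ) :
    a * (b * a) ^ n = (a * b) ^ n * a := by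
  induction n with
  | zero => simp
  | succ k ih =>
    calc a * (b * a) ^ (k+1) = a * ((b * a) * (b * a) ^ k) := by rw [pow_succ']
      _ = ((a * b) * a) * (b * a) ^ k := by rw [← mul_assoc, ← mul_assoc]
      _ = (a * b) * ((a * b) ^ k * a) := by rw [mul_assoc, ih]
      _ = (a * b) ^ (k+1) * a := by rw [← mul_assoc, ← pow_succ']

lemma stmt18_geom {R : Type*} [Ring R] (x : R) (n : ℕ) (h : (1 - x) ^ (n + 1) = 0) :
    (∑ m ∈ Finset.range (n + 1), (1 - x) ^ m) * x = 1 := by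
  have h1 := geom_sum_mul (1 - x) (n + 1)
  rw [h] at h1
  have h2 : (∑ m ∈ Finset.range (n + 1), (1 - x) ^ m) * x
      = -((∑ m ∈ Finset.range (n + 1), (1 - x) ^ m) * ((1 - x) - 1)) := by
    rw [← mul_neg, neg_sub, sub_sub_cancel]
  rw [h2, h1]
  simp

lemma stmt18_central {R : Type*} [Ring R] (i c : ℕ) (a : R) :
    Commute ((-1 : R) ^ i * (c : R)) a :=
  (((Commute.neg_one_left a).pow_left i)).mul_left (Nat.cast_commute c a)

/-- In a (possibly noncommutative) ring, if `(1 - g f)^(n+1) = 0` then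
`f₁ := Σ_{m=0}^{n} Σ_{i=0}^{m} (-1)^i C(m,i) (f g)^i f` satisfies `g * f₁ = 1`, and if
additionally `(1 - f g)^(n+1) = 0`, also `f₁ * g = 1`. -/
theorem stmt18 {R : Type*} [Ring R] (f g : R) (n : ℕ)
    (h : (1 - g * f) ^ (n + 1) = 0) :
    g * (∑ m ∈ Finset.range (n + 1), ∑ i ∈ Finset.range (m + 1),
        (-1 : R) ^ i * (m.choose i : R) * ((f * g) ^ i * f)) = 1 ∧
    ((1 - f * g) ^ (n + 1) = 0 →
      (∑ m ∈ Finset.range (n + 1), ∑ i ∈ Finset.range (m + 1),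
        (-1 : R) ^ i * (m.choose i : R) * ((f * g) ^ i * f)) * g = 1) := by
  constructor
  · rw [Finset.mul_sum]
    have key : ∀ m ∈ Finset.range (n + 1),
        g * ∑ i ∈ Finset.range (m + 1), (-1 : R) ^ i * (m.choose i : R) * ((f * g) ^ i * f)
          = (1 - g * f) ^ m * (g * f) := by
      intro m _
      rw [Finset.mul_sum, ← stmt18_expand (g * f) m, Finset.sum_mul]
      apply Finset.sum_congr rfl
      intro i _
      have hc : g * ((f * g) ^ i * f) = (g * f) ^ i * (g * f) := by
        rw [← mul_assoc, stmt18_conj g f i, mul_assoc]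
      rw [← mul_assoc, ← (stmt18_central i (m.choose i) g).eq, mul_assoc, hc, ← mul_assoc]
    rw [Finset.sum_congr rfl key, ← Finset.sum_mul]
    exact stmt18_geom (g * f) n h
  · intro h2
    rw [Finset.sum_mul]
    have key : ∀ m ∈ Finset.range (n + 1),
        (∑ i ∈ Finset.range (m + 1), (-1 : R) ^ i * (m.choose i : R) * ((f * g) ^ i * f)) * g
          = (1 - f * g) ^ m * (f * g) := by
      intro m _
      rw [← stmt18_expand (f * g) m, Finset.sum_mul, Finset.sum_mul]
      apply Finset.sum_congr rfl
      intro i _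
      simp only [mul_assoc]
    rw [Finset.sum_congr rfl key, ← Finset.sum_mul]
    exact stmt18_geom (f * g) n h2
end
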